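/- arXiv:1706.05343 — 6 statements merged into one kernel-verified Lean document; each statement's English description precedes it below -/
import Mathlib

section
/- Let p be a prime and let P be a finite p-group. Let φ be an automorphism of P such that φ fixes the element a⁻¹ · φ(a) for every a ∈ P (i.e., φ acts trivially on all of the 'commutators' it creates). Then the order of φ in the automorphism group of P is a power of p. -/
/-- If `φ` is an automorphism of a finite `p`-group `P` fixing `a⁻¹ * φ a` for
every `a ∈ P`, then the order of `φ` in the automorphism group of `P` is a
power of `p`. -/
theorem stmt_0 {p : ℕ} (hp : p.Prime) {P : Type*} [Group P] [Finite P]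
    (hP : IsPGroup p P) (φ : MulAut P)
    (hφ : ∀ a : P, φ (a⁻¹ * φ a) = a⁻¹ * φ a) :
    ∃ k : ℕ, orderOf φ = p ^ k := by
  have key : ∀ (m : ℕ) (a : P), (φ ^ m) a = a * (a⁻¹ * φ a) ^ m := by
    intro m
    induction m with
    | zero => intro a; simp
    | succ m ih =>
      intro a
      have h1 : (φ ^ (m + 1)) a = φ ((φ ^ m) a) := by
        rw [pow_succ']; rfl
      rw [h1, ih, map_mul, map_pow, hφ, pow_succ']
      simp [mul_assoc]
  have : Fact p.Prime := ⟨hp⟩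
  obtain ⟨n, hn⟩ := IsPGroup.iff_card.mp hP
  have hpow : φ ^ (p ^ n) = 1 := by
    ext a
    rw [key, ← hn, pow_card_eq_one', mul_one]
    rfl
  have hdvd : orderOf φ ∣ p ^ n := orderOf_dvd_of_pow_eq_one hpow
  exact (Nat.dvd_prime_pow hp).mp hdvd |>.imp fun k hk => hk.2
end

section
/- Let p be a prime, G a group, P a finite subgroup of G, Q a subgroup of G which is a p-group (every element of Q has p-power order), and H a subgroup of G. Assume that the commutator subgroup ⁅P, H⁆ is contained in Q and that H centralizes Q (H ≤ C_G(Q)). Then for every h ∈ H there exists k ∈ ℕ such that h^(p^k) centralizes P, i.e., h^(p^k) ∈ C_G(P). -/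
/-!
Conjugation by `h` sends `x ∈ P` to `⁅h, x⁆ * x`, and `⁅h, x⁆ ∈ Q` commutes with `h`, so
conjugation by `h ^ n` sends `x` to `⁅h, x⁆ ^ n * x`. The finitely many commutators `⁅h, x⁆`
lie in the `p`-group `Q`, hence share an exponent `p ^ k`, and `h ^ p ^ k` centralizes `P`.
-/

open scoped commutatorElement

theorem IsPGroup.exists_forall_pow_eq_one {p : ℕ} {K : Type*} [Group K] (hK : IsPGroup p K)
    {ι : Type*} [Finite ι] (f : ι → K) : ∃ k : ℕ, ∀ i, f i ^ p ^ k = 1 := by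
  choose m hm using fun i => hK (f i)
  obtain ⟨k, hk⟩ := Finite.exists_le m
  refine ⟨k, fun i => ?_⟩
  obtain ⟨d, hd⟩ := pow_dvd_pow p (hk i)
  rw [hd, pow_mul, hm i, one_pow]

theorem pow_mul_mul_inv_pow_eq_commutatorElement_pow_mul {G : Type*} [Group G] {h x : G}
    (hc : Commute h ⁅h, x⁆) (n : ℕ) : h ^ n * x * (h ^ n)⁻¹ = ⁅h, x⁆ ^ n * x := by
  induction n with
  | zero => simp
  | succ n ih =>
    calc h ^ (n + 1) * x * (h ^ (n + 1))⁻¹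
        = h * (h ^ n * x * (h ^ n)⁻¹) * h⁻¹ := by group
      _ = ⁅h, x⁆ ^ n * (h * x * h⁻¹) := by rw [ih, ← mul_assoc, (hc.pow_right n).eq]; group
      _ = ⁅h, x⁆ ^ (n + 1) * x := by
        rw [pow_succ, mul_assoc (⁅h, x⁆ ^ n)]
        congr 1
        rw [commutatorElement_def]
        group

theorem Commute.pow_left_of_commutatorElement_pow_eq_one {G : Type*} [Group G] {h x : G}
    (hc : Commute h ⁅h, x⁆) {n : ℕ} (hn : ⁅h, x⁆ ^ n = 1) : Commute (h ^ n) x := by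
  have := pow_mul_mul_inv_pow_eq_commutatorElement_pow_mul hc n
  rwa [hn, one_mul, mul_inv_eq_iff_eq_mul] at this

theorem stmt_1_general {p : ℕ} {G : Type*} [Group G]
    (P Q H : Subgroup G) [Finite P] (hQ : IsPGroup p Q)
    (hPH : ⁅P, H⁆ ≤ Q) (hHQ : H ≤ Subgroup.centralizer (Q : Set G)) :
    ∀ h ∈ H, ∃ k : ℕ, h ^ (p ^ k) ∈ Subgroup.centralizer (P : Set G) := by
  intro h hh
  have hc : ∀ x ∈ P, ⁅h, x⁆ ∈ Q := fun x hx =>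
    hPH (Subgroup.commutator_comm H P ▸ Subgroup.commutator_mem_commutator hh hx)
  obtain ⟨k, hk⟩ := hQ.exists_forall_pow_eq_one fun x : P => (⟨⁅h, x⁆, hc x x.2⟩ : Q)
  refine ⟨k, Subgroup.mem_centralizer_iff.2 fun x hx => ?_⟩
  have hcomm : Commute h ⁅h, x⁆ :=
    (Subgroup.mem_centralizer_iff.1 (hHQ hh) _ (hc x hx)).symm
  have hpow : ⁅h, x⁆ ^ p ^ k = 1 := congrArg Subtype.val (hk ⟨x, hx⟩)
  exact (hcomm.pow_left_of_commutatorElement_pow_eq_one hpow).eq.symm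

/-- Two-step stability: if `⁅P, H⁆ ≤ Q` for a `p`-group `Q` centralized by `H`,
and `P` is finite, then for every `h ∈ H` some `p`-power of `h`
centralizes `P`. -/
theorem stmt_1 {p : ℕ} (hp : p.Prime) {G : Type*} [Group G]
    (P Q H : Subgroup G) [Finite P] (hQ : IsPGroup p Q)
    (hPH : ⁅P, H⁆ ≤ Q) (hHQ : H ≤ Subgroup.centralizer (Q : Set G)) :
    ∀ h ∈ H, ∃ k : ℕ, h ^ (p ^ k) ∈ Subgroup.centralizer (P : Set G) :=
  stmt_1_general P Q H hQ hPH hHQ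
end

section
/- Let p be a prime, G a finite group, P a normal p-subgroup of G, and H a subgroup of G such that the iterated commutator subgroup ⁅⁅P, H⁆, H⁆ is trivial. Then the subgroup H ∩ C_G(P) is normal in H and the quotient group H / (H ∩ C_G(P)) is a p-group. -/
/-!
Write `c = ⁅x⁻¹, h⁻¹⁆` for `x ∈ P` and `h ∈ H`, so that `h⁻¹ x h = x c`. Since `⁅⁅P, H⁆, H⁆ = 1`,
`c` commutes with `h`, hence conjugating by `h ^ m` gives `x c ^ m`. As `P` is normal, `c ∈ P`,
so if `x ^ p ^ k = 1` throughout the finite `p`-group `P`, then every `h ^ p ^ k` centralizes `P`.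
-/

open Subgroup
open scoped commutatorElement

theorem inv_pow_mul_mul_pow_of_commute {G : Type*} [Group G] {x h c : G}
    (hxc : h⁻¹ * x * h = x * c) (hc : Commute c h) (m : ℕ) :
    (h ^ m)⁻¹ * x * h ^ m = x * c ^ m := by
  induction m with
  | zero => simp
  | succ m ih =>
    have hcm : (h ^ m)⁻¹ * c * h ^ m = c := by
      rw [mul_assoc, (hc.pow_right m).eq, inv_mul_cancel_left]
    calc (h ^ (m + 1))⁻¹ * x * h ^ (m + 1)
        = (h ^ m)⁻¹ * (h⁻¹ * x * h) * h ^ m := by rw [pow_succ']; group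
      _ = ((h ^ m)⁻¹ * x * h ^ m) * ((h ^ m)⁻¹ * c * h ^ m) := by rw [hxc]; group
      _ = x * c ^ (m + 1) := by rw [ih, hcm, pow_succ, mul_assoc]

theorem pow_mem_centralizer_of_commutator_commutator_eq_bot {G : Type*} [Group G]
    {P H : Subgroup G} [P.Normal] (hcomm : ⁅⁅P, H⁆, H⁆ = ⊥) {n : ℕ}
    (hP : ∀ x ∈ P, x ^ n = 1) {h : G} (hh : h ∈ H) :
    h ^ n ∈ centralizer (P : Set G) := by
  rw [mem_centralizer_iff]
  intro x hx
  set c := ⁅x⁻¹, h⁻¹⁆ with hc_def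
  have hcPH : c ∈ ⁅P, H⁆ := commutator_mem_commutator (P.inv_mem hx) (H.inv_mem hh)
  have hch : Commute c h :=
    (mem_centralizer_iff.mp (commutator_eq_bot_iff_le_centralizer.mp hcomm hcPH) h hh).symm
  have hxc : h⁻¹ * x * h = x * c := by simp [hc_def, commutatorElement_def, mul_assoc]
  have hconj := inv_pow_mul_mul_pow_of_commute hxc hch n
  rw [hP c (commutator_le_left P H hcPH), mul_one] at hconj
  calc x * h ^ n = h ^ n * ((h ^ n)⁻¹ * x * h ^ n) := by group
    _ = h ^ n * x := by rw [hconj]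

theorem IsPGroup.quotient_of_forall_pow_pow_mem {p : ℕ} {G : Type*} [Group G] (N : Subgroup G)
    [N.Normal] {k : ℕ} (hN : ∀ g : G, g ^ p ^ k ∈ N) : IsPGroup p (G ⧸ N) := by
  intro q
  induction q using QuotientGroup.induction_on with
  | H g => exact ⟨k, by rw [← QuotientGroup.mk_pow, QuotientGroup.eq_one_iff]; exact hN g⟩

theorem stmt_2_general {p : ℕ} {G : Type*} [Group G] [Finite G]
    (P H : Subgroup G) (hPn : P.Normal) (hP : IsPGroup p P)
    (hcomm : ⁅⁅P, H⁆, H⁆ = ⊥) :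
    ∃ hn : ((Subgroup.centralizer (P : Set G)).subgroupOf H).Normal,
      @IsPGroup p (H ⧸ (Subgroup.centralizer (P : Set G)).subgroupOf H)
        (@QuotientGroup.Quotient.group _ _ _ hn) := by
  obtain ⟨k, hk⟩ := isPGroup_iff_exists_pow_pow_eq_one.mp hP
  have hPexp : ∀ x ∈ P, x ^ p ^ k = 1 := fun x hx => congrArg Subtype.val (hk ⟨x, hx⟩)
  refine ⟨normal_subgroupOf, IsPGroup.quotient_of_forall_pow_pow_mem (k := k) _ fun h => ?_⟩
  exact mem_subgroupOf.mpr
    (pow_mem_centralizer_of_commutator_commutator_eq_bot hcomm hPexp h.2)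

/-- If `P` is a normal `p`-subgroup of a finite group `G` and `H` is a subgroup
with `⁅⁅P, H⁆, H⁆ = ⊥`, then `H ∩ C_G(P)` is normal in `H` and the quotient
`H / (H ∩ C_G(P))` is a `p`-group. -/
theorem stmt_2 {p : ℕ} (hp : p.Prime) {G : Type*} [Group G] [Finite G]
    (P H : Subgroup G) (hPn : P.Normal) (hP : IsPGroup p P)
    (hcomm : ⁅⁅P, H⁆, H⁆ = ⊥) :
    ∃ hn : ((Subgroup.centralizer (P : Set G)).subgroupOf H).Normal,
      @IsPGroup p (H ⧸ (Subgroup.centralizer (P : Set G)).subgroupOf H)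
        (@QuotientGroup.Quotient.group _ _ _ hn) :=
  stmt_2_general P H hPn hP hcomm
end

section
/- Let p be a prime and G a finite group. Let P be a normal p-subgroup of G with C_G(P) ≤ P, and let H be a subgroup of G such that the iterated commutator subgroup ⁅⁅P, H⁆, H⁆ is trivial. Then H is a p-group. -/
/-!
Let `h ∈ H` have order prime to `p`. For `x ∈ P` the commutator `c = ⁅h, x⁆` lies in `⁅P, H⁆ ≤ P`
and commutes with `h`, so `⁅h ^ n, x⁆ = c ^ n`; taking `n = orderOf h` gives `c ^ n = 1`, and as
`c` is a `p`-element, `c = 1`. Hence `h` centralizes `P`, so `h ∈ P` is a `p`-element of order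
prime to `p`, i.e. `h = 1`. A finite group whose `p'`-elements are trivial is a `p`-group.
-/

open scoped commutatorElement

theorem commutatorElement_pow_left_of_commute {G : Type*} [Group G] {g x : G}
    (h : Commute g ⁅g, x⁆) (n : ℕ) : ⁅g ^ n, x⁆ = ⁅g, x⁆ ^ n := by
  induction n with
  | zero => simp
  | succ n ih =>
    rw [pow_succ', commutatorElement_mul_left_eq_conj_mul, ih, (h.pow_right n).eq,
      mul_inv_cancel_right, pow_succ]

theorem commutatorElement_pow_orderOf_eq_one {G : Type*} [Group G] {g x : G}
    (h : Commute g ⁅g, x⁆) : ⁅g, x⁆ ^ orderOf g = 1 := by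
  rw [← commutatorElement_pow_left_of_commute h, pow_orderOf_eq_one, commutatorElement_one_left]

theorem IsPGroup.eq_one_of_pow_eq_one {p : ℕ} {G : Type*} [Group G] (hG : IsPGroup p G)
    {n : ℕ} (hn : p.Coprime n) {g : G} (hg : g ^ n = 1) : g = 1 :=
  orderOf_eq_one_iff.mp ((hG.orderOf_coprime hn g).eq_one_of_dvd (orderOf_dvd_of_pow_eq_one hg))

theorem IsPGroup.eq_one_of_mem_of_pow_eq_one {p : ℕ} {G : Type*} [Group G] {P : Subgroup G}
    (hP : IsPGroup p P) {n : ℕ} (hn : p.Coprime n) {g : G} (hgP : g ∈ P) (hg : g ^ n = 1) :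
    g = 1 :=
  congrArg Subtype.val (hP.eq_one_of_pow_eq_one hn (g := ⟨g, hgP⟩) (Subtype.ext hg))

theorem isPGroup_of_forall_coprime_orderOf {p : ℕ} (hp : p.Prime) {G : Type*} [Group G]
    [Finite G] (h : ∀ g : G, p.Coprime (orderOf g) → g = 1) : IsPGroup p G := by
  intro g
  refine ⟨(orderOf g).factorization p, h _ ?_⟩
  rw [orderOf_pow, Nat.gcd_eq_right (Nat.ordProj_dvd _ _)]
  exact Nat.coprime_ordCompl hp (orderOf_pos g).ne'

theorem Subgroup.mem_centralizer_of_commutator_commutator_eq_bot {p : ℕ} {G : Type*} [Group G]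
    {P H : Subgroup G} [P.Normal] (hP : IsPGroup p P) (hcomm : ⁅⁅P, H⁆, H⁆ = ⊥) {h : G}
    (hh : h ∈ H) (hord : p.Coprime (orderOf h)) : h ∈ centralizer (P : Set G) := by
  refine mem_centralizer_iff.mpr fun x hx => ?_
  have hcPH : ⁅h, x⁆ ∈ ⁅P, H⁆ := commutator_comm H P ▸ commutator_mem_commutator hh hx
  have hcomm_h : Commute h ⁅h, x⁆ :=
    mem_centralizer_iff.mp (commutator_eq_bot_iff_le_centralizer.mp hcomm hcPH) h hh
  have hc : ⁅h, x⁆ = 1 := hP.eq_one_of_mem_of_pow_eq_one hord (commutator_le_left P H hcPH)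
    (commutatorElement_pow_orderOf_eq_one hcomm_h)
  exact (commutatorElement_eq_one_iff_commute.mp hc).eq.symm

/-- If `G` is a finite group with a normal `p`-subgroup `P` satisfying
`C_G(P) ≤ P`, and `H` is a subgroup with `⁅⁅P, H⁆, H⁆ = ⊥`, then `H` is a
`p`-group. -/
theorem stmt_3 {p : ℕ} (hp : p.Prime) {G : Type*} [Group G] [Finite G]
    (P H : Subgroup G) (hPn : P.Normal) (hP : IsPGroup p P)
    (hC : Subgroup.centralizer (P : Set G) ≤ P)
    (hcomm : ⁅⁅P, H⁆, H⁆ = ⊥) :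
    IsPGroup p H := by
  refine isPGroup_of_forall_coprime_orderOf hp fun h hord => Subtype.ext ?_
  rw [← Subgroup.orderOf_coe] at hord
  have hhP : (h : G) ∈ P :=
    hC (Subgroup.mem_centralizer_of_commutator_commutator_eq_bot hP hcomm h.2 hord)
  exact hP.eq_one_of_mem_of_pow_eq_one hord hhP (pow_orderOf_eq_one _)
end

section
/- Let p be a prime and G a finite group. Let P be a normal p-subgroup of G with C_G(P) ≤ P. Let T be a subgroup of G and H a subgroup of G such that H centralizes T (H ≤ C_G(T)) and the commutator subgroup ⁅H, P⁆ is contained in T. Then H is a p-group. -/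
/-- Key step: if `g ∈ H` has order coprime to `p`, then `g = 1`. -/
lemma stmt_4_key {p : ℕ} (hp : p.Prime) {G : Type*} [Group G] [Finite G]
    (P T H : Subgroup G) (hPn : P.Normal) (hP : IsPGroup p P)
    (hC : Subgroup.centralizer (P : Set G) ≤ P)
    (hHT : H ≤ Subgroup.centralizer (T : Set G))
    (hHP : ⁅H, P⁆ ≤ T)
    (g : G) (hgH : g ∈ H) (hcop : ¬ p ∣ orderOf g) : g = 1 := by
  have hPHle : ⁅P, H⁆ ≤ T := by rwa [Subgroup.commutator_comm]
  -- g centralizes P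
  have hcent : ∀ x ∈ P, x * g = g * x := by
    intro x hx
    set c := x * g * x⁻¹ * g⁻¹ with hc
    have key : ∀ n : ℕ, x * g ^ n * x⁻¹ * (g ^ n)⁻¹ = c ^ n := by
      intro n
      induction n with
      | zero => simp
      | succ n ih =>
        have hmemT : x * g ^ n * x⁻¹ * (g ^ n)⁻¹ ∈ T := by
          have := Subgroup.commutator_mem_commutator hx (pow_mem hgH n)
          rw [commutatorElement_def] at this
          exact hPHle this
        have hcomm : (x * g ^ n * x⁻¹ * (g ^ n)⁻¹) * g
            = g * (x * g ^ n * x⁻¹ * (g ^ n)⁻¹) :=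
          Subgroup.mem_centralizer_iff.mp (hHT hgH) _ hmemT
        calc x * g ^ (n + 1) * x⁻¹ * (g ^ (n + 1))⁻¹
            = (x * g * x⁻¹ * g⁻¹) * (g * (x * g ^ n * x⁻¹ * (g ^ n)⁻¹) * g⁻¹) := by
              rw [pow_succ']; group
          _ = (x * g * x⁻¹ * g⁻¹) * (x * g ^ n * x⁻¹ * (g ^ n)⁻¹) := by
              rw [← hcomm]; group
          _ = c * c ^ n := by rw [ih]
          _ = c ^ (n + 1) := (pow_succ' c n).symm
    have hcm : c ^ orderOf g = 1 := by
      rw [← key (orderOf g), pow_orderOf_eq_one]; group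
    have hcP : c ∈ P := by
      have : c = x * (g * x⁻¹ * g⁻¹) := by rw [hc]; group
      rw [this]
      exact mul_mem hx (hPn.conj_mem _ (inv_mem hx) g)
    obtain ⟨k, hk⟩ := hP ⟨c, hcP⟩
    have hck : c ^ p ^ k = 1 := by
      have := congrArg (Subtype.val) hk
      simpa using this
    have h1 : orderOf c ∣ p ^ k := orderOf_dvd_of_pow_eq_one hck
    have h2 : orderOf c ∣ orderOf g := orderOf_dvd_of_pow_eq_one hcm
    have hco : Nat.Coprime (p ^ k) (orderOf g) :=
      Nat.Coprime.pow_left _ ((hp.coprime_iff_not_dvd).mpr hcop)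
    have : orderOf c = 1 := Nat.eq_one_of_dvd_coprimes hco h1 h2
    have hc1 : c = 1 := orderOf_eq_one_iff.mp this
    have : x * g * x⁻¹ * g⁻¹ = 1 := hc1
    calc x * g = (x * g * x⁻¹ * g⁻¹) * (g * x) := by group
      _ = g * x := by rw [this, one_mul]
  have hgP : g ∈ P := hC (Subgroup.mem_centralizer_iff.mpr hcent)
  obtain ⟨k, hk⟩ := hP ⟨g, hgP⟩
  have hgk : g ^ p ^ k = 1 := by
    have := congrArg (Subtype.val) hk
    simpa using this
  have h1 : orderOf g ∣ p ^ k := orderOf_dvd_of_pow_eq_one hgk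
  have hco : Nat.Coprime (p ^ k) (orderOf g) :=
    Nat.Coprime.pow_left _ ((hp.coprime_iff_not_dvd).mpr hcop)
  have : orderOf g = 1 := Nat.eq_one_of_dvd_coprimes hco h1 dvd_rfl
  exact orderOf_eq_one_iff.mp this

/-- If `G` is a finite group with a normal `p`-subgroup `P` satisfying
`C_G(P) ≤ P`, and `H` is a subgroup centralizing a subgroup `T` with
`⁅H, P⁆ ≤ T`, then `H` is a `p`-group. -/
theorem stmt_4 {p : ℕ} (hp : p.Prime) {G : Type*} [Group G] [Finite G]
    (P T H : Subgroup G) (hPn : P.Normal) (hP : IsPGroup p P)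
    (hC : Subgroup.centralizer (P : Set G) ≤ P)
    (hHT : H ≤ Subgroup.centralizer (T : Set G))
    (hHP : ⁅H, P⁆ ≤ T) :
    IsPGroup p H := by
  intro g
  set n := orderOf (g : G) with hn
  have hn0 : n ≠ 0 := (orderOf_pos _).ne'
  set k := n.factorization p with hkdef
  refine ⟨k, ?_⟩
  have hdvd : p ^ k ∣ n := Nat.ordProj_dvd n p
  have hord : orderOf ((g : G) ^ p ^ k) = n / p ^ k := by
    rw [orderOf_pow, ← hn, Nat.gcd_eq_right hdvd]
  have hnd : ¬ p ∣ orderOf ((g : G) ^ p ^ k) := by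
    rw [hord]
    exact Nat.not_dvd_ordCompl hp hn0
  have h1 : ((g : G)) ^ p ^ k = 1 :=
    stmt_4_key hp P T H hPn hP hC hHT hHP _ (pow_mem g.2 _) hnd
  exact Subtype.ext (by simpa using h1)
end

section
/- Let p be a prime and G a finite group. Let P be a normal p-subgroup of G with C_G(P) ≤ P, and let S be a Sylow p-subgroup of G. Let T be a subgroup of S which is normal in S (equivalently, T ≤ S and S ≤ N_G(T)). Let N ≤ M be subgroups of G such that: T ≤ N; M ≤ N_G(T); M is normal in N_G(T); M ∩ S = T; and M ≤ N ⊔ (C_G(T) ∩ M) (i.e., M is generated by N together with C_M(T)). Then M = N. -/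
/-!
Put `C = C_M(T)`. It is normalized by `N_G(T)`, which contains `S` as a Sylow subgroup, and
`C ∩ S ≤ M ∩ S = T` centralizes `C`. Every `p`-subgroup of `C` is `N_G(T)`-conjugate into `S`,
hence into `C ∩ S`, so it is central in `C`. By Burnside's transfer theorem the `p'`-elements of
`C` then form a subgroup `K`; it is normalized by `P ≤ S`, so `[K, P] ≤ K ∩ P = 1` and
`K ≤ C_G(P) ≤ P`, i.e. `K = 1`. Thus `C` is a `p`-group normalized by `S`, so
`C ≤ M ∩ S = T ≤ N`, and `M = N ⊔ C = N`.
-/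

open Subgroup

section

variable {G : Type*} [Group G] {p : ℕ}

theorem IsPGroup.le_sylow_of_le_normalizer {C : Subgroup G} (hC : IsPGroup p C) {S : Sylow p G}
    (hS : (S : Subgroup G) ≤ normalizer (C : Set G)) : C ≤ S :=
  le_sup_left.trans (S.is_maximal' (hC.to_sup_of_normal_left' S.isPGroup' hS) le_sup_right).le

variable [Fact p.Prime] [Finite G]

theorem Sylow.exists_mem_le_smul {S : Sylow p G} {H Q : Subgroup G}
    (hSH : (S : Subgroup G) ≤ H) (hQH : Q ≤ H) (hQ : IsPGroup p Q) :
    ∃ h ∈ H, Q ≤ ((h • S : Sylow p G) : Subgroup G) := by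
  obtain ⟨R, hQR⟩ := (hQ.comap_subtype (K := H)).exists_le_sylow
  obtain ⟨h, rfl⟩ := MulAction.exists_smul_eq H (S.subtype hSH) R
  rw [Sylow.smul_subtype] at hQR
  exact ⟨h, h.2, fun q hq => hQR (show (⟨q, hQH hq⟩ : H) ∈ Q.subgroupOf H from hq)⟩

theorem le_centralizer_of_isPGroup {S : Sylow p G} {H C Q : Subgroup G}
    (hSH : (S : Subgroup G) ≤ H) (hCH : C ≤ H) (hHC : H ≤ normalizer (C : Set G))
    (hCS : C ⊓ S ≤ centralizer (C : Set G)) (hQ : IsPGroup p Q) (hQC : Q ≤ C) :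
    Q ≤ centralizer (C : Set G) := by
  obtain ⟨h, hh, hQS⟩ := S.exists_mem_le_smul hSH (hQC.trans hCH) hQ
  have hconj : ∀ c ∈ C, h⁻¹ * c * h ∈ C := fun c hc => by
    simpa using (mem_normalizer_iff.mp (hHC (inv_mem hh)) c).mp hc
  intro q hq
  rw [mem_centralizer_iff]
  intro c hc
  have hqS : h⁻¹ * q * h ∈ (S : Subgroup G) := by
    have := mem_pointwise_smul_iff_inv_smul_mem.mp (hQS hq)
    simpa [MulAut.smul_def, mul_assoc] using this
  have hcomm := mem_centralizer_iff.mp (hCS ⟨hconj q (hQC hq), hqS⟩) _ (hconj c hc)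
  calc c * q = h * ((h⁻¹ * c * h) * (h⁻¹ * q * h)) * h⁻¹ := by group
    _ = h * ((h⁻¹ * q * h) * (h⁻¹ * c * h)) * h⁻¹ := by rw [hcomm]
    _ = q * c := by group

theorem eq_bot_of_le_normalizer_of_not_dvd_card {P K : Subgroup G} [P.Normal]
    (hP : IsPGroup p P) (hCP : centralizer (P : Set G) ≤ P) (hK : ¬ p ∣ Nat.card K)
    (hPK : P ≤ normalizer (K : Set G)) : K = ⊥ := by
  obtain ⟨n, hn⟩ := IsPGroup.iff_card.mp hP
  have hdisj : Disjoint K P := disjoint_of_coprime_natCard <| hn ▸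
    ((Nat.Prime.coprime_iff_not_dvd Fact.out).mpr hK).symm.pow_right n
  refine hdisj.eq_bot_of_le (le_trans ?_ hCP)
  intro k hk
  rw [mem_centralizer_iff]
  intro g hg
  have hcomm : k * g * k⁻¹ * g⁻¹ = 1 := by
    refine disjoint_def.mp hdisj ?_ ?_
    · simpa [mul_assoc] using mul_mem hk ((mem_normalizer_iff.mp (hPK hg) _).mp (inv_mem hk))
    · exact mul_mem (Normal.conj_mem inferInstance g hg k) (inv_mem hg)
  calc g * k = (k * g * k⁻¹ * g⁻¹)⁻¹ * (k * g) := by group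
    _ = k * g := by rw [hcomm, inv_one, one_mul]

namespace MonoidHom

variable (Q : Sylow p G) (hQ : normalizer (Q : Set G) ≤ centralizer (Q : Set G))

theorem mem_ker_transferSylow_iff {g : G} :
    g ∈ (transferSylow Q hQ).ker ↔ ¬ p ∣ orderOf g := by
  constructor
  · intro hg hdvd
    refine not_dvd_card_ker_transferSylow Q hQ (hdvd.trans ?_)
    simpa using orderOf_dvd_natCard (⟨g, hg⟩ : (transferSylow Q hQ).ker)
  · intro hg
    rw [mem_ker, ← orderOf_eq_one_iff]
    exact Nat.Coprime.eq_one_of_dvd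
      (Q.isPGroup'.orderOf_coprime ((Nat.Prime.coprime_iff_not_dvd Fact.out).mpr hg) _)
      (orderOf_map_dvd _ g)

end MonoidHom

theorem mem_map_ker_transferSylow_iff {C : Subgroup G} (Q : Sylow p C)
    (hQ : normalizer (Q : Set C) ≤ centralizer (Q : Set C)) {g : G} :
    g ∈ (MonoidHom.transferSylow Q hQ).ker.map C.subtype ↔ g ∈ C ∧ ¬ p ∣ orderOf g := by
  constructor
  · rintro ⟨c, hc, rfl⟩
    exact ⟨c.2, by simpa using (MonoidHom.mem_ker_transferSylow_iff Q hQ).mp hc⟩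
  · rintro ⟨hg, hp⟩
    exact ⟨⟨g, hg⟩, (MonoidHom.mem_ker_transferSylow_iff Q hQ).mpr (by simpa using hp), rfl⟩

theorem normalizer_le_normalizer_map_ker_transferSylow {C : Subgroup G} (Q : Sylow p C)
    (hQ : normalizer (Q : Set C) ≤ centralizer (Q : Set C)) :
    normalizer (C : Set G) ≤
      normalizer (((MonoidHom.transferSylow Q hQ).ker.map C.subtype : Subgroup G) : Set G) := by
  intro g hg
  rw [mem_normalizer_iff] at hg ⊢
  intro x
  have hx : orderOf (g * x * g⁻¹) = orderOf x :=
    (SemiconjBy.orderOf_eq g (by simp [SemiconjBy, mul_assoc])).symm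
  simp only [mem_map_ker_transferSylow_iff, hx, hg x]

theorem isPGroup_of_forall_isPGroup_le_centralizer {P C : Subgroup G} [P.Normal]
    (hP : IsPGroup p P) (hCP : centralizer (P : Set G) ≤ P) (hPC : P ≤ normalizer (C : Set G))
    (hcent : ∀ Q : Subgroup G, IsPGroup p Q → Q ≤ C → Q ≤ centralizer (C : Set G)) :
    IsPGroup p C := by
  obtain ⟨Q⟩ : Nonempty (Sylow p C) := inferInstance
  have hQC : Q.map C.subtype ≤ centralizer (C : Set G) :=
    hcent _ (Q.isPGroup'.map _) (map_subtype_le _)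
  have hQ : normalizer (Q : Set C) ≤ centralizer (Q : Set C) := fun z _ =>
    mem_centralizer_iff.mpr fun q hq => Subtype.ext
      ((mem_centralizer_iff.mp (hQC ⟨q, hq, rfl⟩) z z.2).symm)
  have hK : (MonoidHom.transferSylow Q hQ).ker.map C.subtype = ⊥ :=
    eq_bot_of_le_normalizer_of_not_dvd_card hP hCP
      ((card_map_of_injective C.subtype_injective).symm ▸
        MonoidHom.not_dvd_card_ker_transferSylow Q hQ)
      (hPC.trans (normalizer_le_normalizer_map_ker_transferSylow Q hQ))
  rw [map_eq_bot_iff_of_injective _ C.subtype_injective] at hK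
  have hQtop : (Q : Subgroup C) = ⊤ :=
    isComplement'_bot_left.mp (hK ▸ MonoidHom.ker_transferSylow_isComplement' Q hQ)
  exact (hQtop ▸ Q.isPGroup').of_equiv topEquiv

end

theorem stmt_5_general {p : ℕ} (hp : p.Prime) {G : Type*} [Group G] [Finite G]
    (P : Subgroup G) (hPn : P.Normal) (hP : IsPGroup p P)
    (hC : Subgroup.centralizer (P : Set G) ≤ P)
    (S : Sylow p G) (T : Subgroup G)
    (hSn : (S : Subgroup G) ≤ Subgroup.normalizer (T : Set G))
    (N M : Subgroup G) (hNM : N ≤ M) (hTN : T ≤ N)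
    (hMle : M ≤ Subgroup.normalizer (T : Set G)) (hMn : (M.subgroupOf (Subgroup.normalizer (T : Set G))).Normal)
    (hMS : M ⊓ S = T)
    (hgen : M ≤ N ⊔ (Subgroup.centralizer (T : Set G) ⊓ M)) :
    M = N := by
  have : Fact p.Prime := ⟨hp⟩
  set C := centralizer (T : Set G) ⊓ M
  have hTC : normalizer (T : Set G) ≤ normalizer (C : Set G) :=
    (le_inf (le_normalizer_of_normal_subgroupOf (centralizer_le_normalizer _))
      ((normal_subgroupOf_iff_le_normalizer hMle).mp hMn)).trans inf_normalizer_le_normalizer_inf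
  have hCS : C ⊓ S ≤ centralizer (C : Set G) :=
    calc C ⊓ S ≤ M ⊓ S := inf_le_inf_right _ inf_le_right
      _ = T := hMS
      _ ≤ centralizer (C : Set G) := le_centralizer_iff.mp inf_le_left
  have hCp : IsPGroup p C := isPGroup_of_forall_isPGroup_le_centralizer hP hC
    ((hP.le_sylow_of_normal S).trans (hSn.trans hTC))
    fun Q hQ hQC => le_centralizer_of_isPGroup hSn (inf_le_right.trans hMle) hTC hCS hQ hQC
  have hCT : C ≤ T := hMS ▸ le_inf inf_le_right (hCp.le_sylow_of_le_normalizer (hSn.trans hTC))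
  exact le_antisymm (hgen.trans (sup_le le_rfl (hCT.trans hTN))) hNM

/-- The group-theoretic kernel of the Uniqueness Lemma: with `G` of
characteristic `p`, `S` a Sylow `p`-subgroup, `T ≤ S` normal in `S`,
`N ≤ M ≤ N_G(T)` with `M` normal in `N_G(T)`, `T ≤ N`, `M ∩ S = T` and
`M` generated by `N` together with `C_M(T)`, we get `M = N`. -/
theorem stmt_5 {p : ℕ} (hp : p.Prime) {G : Type*} [Group G] [Finite G]
    (P : Subgroup G) (hPn : P.Normal) (hP : IsPGroup p P)
    (hC : Subgroup.centralizer (P : Set G) ≤ P)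
    (S : Sylow p G) (T : Subgroup G) (hTS : T ≤ S)
    (hSn : (S : Subgroup G) ≤ Subgroup.normalizer (T : Set G))
    (N M : Subgroup G) (hNM : N ≤ M) (hTN : T ≤ N)
    (hMle : M ≤ Subgroup.normalizer (T : Set G)) (hMn : (M.subgroupOf (Subgroup.normalizer (T : Set G))).Normal)
    (hMS : M ⊓ S = T)
    (hgen : M ≤ N ⊔ (Subgroup.centralizer (T : Set G) ⊓ M)) :
    M = N :=
  stmt_5_general hp P hPn hP hC S T hSn N M hNM hTN hMle hMn hMS hgen
end
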